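/- arXiv:2502.02213 — 2 statements merged into one kernel-verified Lean document; each statement's English description precedes it below -/
import Mathlib

section
/- Conditioning on a positive-probability selection event preserves minimal sufficiency: if a statistic W = (T,A) is minimal sufficient for θ in the model {f(·;θ)}, in the sense that f(y₁;θ)/f(y₂;θ) is constant in θ if and only if W(y₁) = W(y₂), and the selection function p depends on y only through W with p(y) > 0 on the selective support, then W is minimal sufficient in the selective model with densities f_S(y;θ) = f(y;θ)p(y)/φ(θ). -/
/-- Conditioning on a positive-probability selection event
preserves minimal sufficiency (likelihood-ratio criterion). If `W` is minimal
sufficient for the family `f` and the selection function `p` factors through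
`W` with `p > 0`, then `W` is minimal sufficient for the selective family
`f_S y θ = f y θ * p y / φ θ`. -/
theorem minimal_sufficiency_preserved_under_selection
    {𝒴 𝒲 Θ : Type*} [Countable 𝒴]
    (f : 𝒴 → Θ → ℝ) (p : 𝒴 → ℝ) (W : 𝒴 → 𝒲)
    (hf_pos : ∀ y θ, 0 < f y θ)
    (hp_pos : ∀ y, 0 < p y) (hp_le : ∀ y, p y ≤ 1)
    (hp_factor : ∀ y₁ y₂, W y₁ = W y₂ → p y₁ = p y₂)
    (φ : Θ → ℝ) (hφ : ∀ θ, φ θ = ∑' y, f y θ * p y) (hφ_pos : ∀ θ, 0 < φ θ)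
    (hmin : ∀ y₁ y₂, W y₁ = W y₂ ↔ ∃ c : ℝ, ∀ θ, f y₁ θ = c * f y₂ θ)
    (fS : 𝒴 → Θ → ℝ) (hfS : ∀ y θ, fS y θ = f y θ * p y / φ θ) :
    ∀ y₁ y₂, W y₁ = W y₂ ↔ ∃ c : ℝ, ∀ θ, fS y₁ θ = c * fS y₂ θ := by
  intro y₁ y₂
  constructor
  · intro hW
    obtain ⟨c, hc⟩ := (hmin y₁ y₂).mp hW
    refine ⟨c, fun θ => ?_⟩
    rw [hfS, hfS, hc, hp_factor y₁ y₂ hW]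
    ring
  · rintro ⟨c, hc⟩
    refine (hmin y₁ y₂).mpr ⟨c * p y₂ / p y₁, fun θ => ?_⟩
    have h := hc θ
    rw [hfS, hfS] at h
    have hφne := (hφ_pos θ).ne'
    have hpne := (hp_pos y₁).ne'
    field_simp at h ⊢
    linarith
end

section
/- G-ancillarity is preserved under selection (forward direction): suppose A is complete for χ for each fixed ψ in the non-selective model, i.e. for every ψ and every bounded measurable g, E_{ψ,χ}[g(A)] = 0 for all χ implies P_{ψ,χ}(g(A)=0) = 1 for all χ. If the conditional selection probability φ(ψ;a) = E_ψ[p(T,A) | A=a] is strictly positive for all (ψ,a), then A is complete for χ for each fixed ψ in the selective model f_S(t,a;θ) = f(t,a;θ)p(t,a)/φ(θ). -/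
/-- G-ancillarity is preserved under selection (forward
direction). In the countable setting with `θ = (ψ, χ)`, selective marginal of
`A` given by `f_S a ψ χ = fA a ψ χ * φa ψ a / φ ψ χ`: if `A` is complete for
`χ` for each fixed `ψ` in the non-selective model and `φa ψ a > 0` for all
`(ψ, a)`, then `A` is complete for `χ` for each fixed `ψ` in the selective
model. Completeness is stated for bounded `g`, with "P(g(A) = 0) = 1" phrased
as: `g a = 0` whenever `a` has positive mass. -/
theorem G_ancillarity_preserved_forward
    {T A Ψ X : Type*} [Countable T] [Countable A]
    (fA : A → Ψ → X → ℝ) (fcond : T → A → Ψ → ℝ) (p : T → A → ℝ)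
    (hfA_nonneg : ∀ a ψ χ, 0 ≤ fA a ψ χ) (hfA_sum : ∀ ψ χ, ∑' a, fA a ψ χ = 1)
    (hfcond_nonneg : ∀ t a ψ, 0 ≤ fcond t a ψ)
    (hfcond_sum : ∀ a ψ, ∑' t, fcond t a ψ = 1)
    (hp : ∀ t a, 0 ≤ p t a ∧ p t a ≤ 1)
    (φa : Ψ → A → ℝ) (hφa : ∀ ψ a, φa ψ a = ∑' t, p t a * fcond t a ψ)
    (hφa_pos : ∀ ψ a, 0 < φa ψ a)
    (φ : Ψ → X → ℝ) (hφ : ∀ ψ χ, φ ψ χ = ∑' a, fA a ψ χ * φa ψ a)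
    (hφ_pos : ∀ ψ χ, 0 < φ ψ χ)
    (fS : A → Ψ → X → ℝ) (hfS : ∀ a ψ χ, fS a ψ χ = fA a ψ χ * φa ψ a / φ ψ χ)
    -- G-ancillarity (completeness of A for χ at each fixed ψ), non-selective model:
    (hcomplete : ∀ (ψ : Ψ) (g : A → ℝ), (∃ M, ∀ a, |g a| ≤ M) →
      (∀ χ, ∑' a, g a * fA a ψ χ = 0) →
      ∀ χ a, 0 < fA a ψ χ → g a = 0) :
    -- G-ancillarity in the selective model:
    ∀ (ψ : Ψ) (g : A → ℝ), (∃ M, ∀ a, |g a| ≤ M) →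
      (∀ χ, ∑' a, g a * fS a ψ χ = 0) →
      ∀ χ a, 0 < fS a ψ χ → g a = 0 := by
  intro ψ g ⟨M, hM⟩ hsum χ a hfsa
  have hφa_le : ∀ a, φa ψ a ≤ 1 := by
    intro a
    rw [hφa]
    calc ∑' t, p t a * fcond t a ψ ≤ ∑' t, fcond t a ψ := by
          by_cases hs : Summable (fun t => fcond t a ψ)
          · exact Summable.tsum_le_tsum (fun t => by
              nlinarith [(hp t a).1, (hp t a).2, hfcond_nonneg t a ψ]) (hs.of_nonneg_of_le
              (fun t => mul_nonneg (hp t a).1 (hfcond_nonneg t a ψ))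
              (fun t => by nlinarith [(hp t a).1, (hp t a).2, hfcond_nonneg t a ψ])) hs
          · have := hfcond_sum a ψ
            rw [tsum_eq_zero_of_not_summable hs] at this
            norm_num at this
      _ = 1 := hfcond_sum a ψ
  have key : ∀ χ, ∑' b, (g b * φa ψ b) * fA b ψ χ = 0 := by
    intro χ
    have h1 := hsum χ
    have h2 : ∀ b, g b * fS b ψ χ = (g b * φa ψ b * fA b ψ χ) / φ ψ χ := by
      intro b; rw [hfS]; ring
    rw [tsum_congr h2, tsum_div_const] at h1
    have := hφ_pos ψ χ
    field_simp at h1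
    linarith
  have hbdd : ∃ M', ∀ b, |g b * φa ψ b| ≤ M' := by
    refine ⟨M, fun b => ?_⟩
    rw [abs_mul, abs_of_pos (hφa_pos ψ b)]
    calc |g b| * φa ψ b ≤ |g b| * 1 := by
          exact mul_le_mul_of_nonneg_left (hφa_le b) (abs_nonneg _)
      _ ≤ M := by rw [mul_one]; exact hM b
  have hfA_pos : 0 < fA a ψ χ := by
    by_contra h
    push_neg at h
    have : fA a ψ χ = 0 := le_antisymm h (hfA_nonneg a ψ χ)
    rw [hfS, this] at hfsa
    simp at hfsa
  have := hcomplete ψ (fun b => g b * φa ψ b) hbdd key χ a hfA_pos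
  have hpos := hφa_pos ψ a
  nlinarith [this]
end
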